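/- arXiv:1909.09391 — 3 statements merged into one kernel-verified Lean document; each statement's English description precedes it below -/
import Mathlib

section
/- Let k be a field, λ ∈ k with λ ≠ 0 and λ ≠ -1, and let I be the ideal of k[x0,x1,x2,x3] generated by x0 + λ·x1 - x3 and x0 - x1 - x2. If α, β, γ, δ ∈ k satisfy α·x0³ + β·x0²·x3 + γ·x1²·x2 + δ·x1·x2·x3 ∈ I, then α = β = γ = δ = 0. -/
open MvPolynomial

/-!
Both generators vanish on the line `t ↦ (t, 1, t - 1, t + l)`, so restricting the cubic to this
line gives the zero polynomial in `t`. Its four coefficients `α + β`, `β l + δ`, `γ + δ (l - 1)`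
and `-(γ + δ l)` form a triangular linear system that forces `α = β = γ = δ = 0` once `l ≠ 0`.
-/

section LineRestriction

variable {R : Type*} [CommRing R]

noncomputable def lineRestriction (l : R) : MvPolynomial (Fin 4) R →ₐ[R] Polynomial R :=
  aeval ![Polynomial.X, 1, Polynomial.X - 1, Polynomial.X + Polynomial.C l]

theorem span_le_ker_lineRestriction (l : R) :
    Ideal.span {X 0 + C l * X 1 - X 3, X 0 - X 1 - X 2} ≤ RingHom.ker (lineRestriction l) := by
  simp [Ideal.span_le, Set.insert_subset_iff, lineRestriction]

theorem lineRestriction_cubic (l α β γ δ : R) :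
    lineRestriction l (C α * X 0 ^ 3 + C β * X 0 ^ 2 * X 3 + C γ * X 1 ^ 2 * X 2
        + C δ * X 1 * X 2 * X 3) =
      (⟨α + β, β * l + δ, γ + δ * (l - 1), -(γ + δ * l)⟩ : Cubic R).toPoly := by
  simp only [lineRestriction, Cubic.toPoly, map_add, map_mul, map_pow, map_sub, map_neg, map_one,
    algHom_C, Polynomial.algebraMap_eq, aeval_X, Matrix.cons_val_zero, Matrix.cons_val,
    Matrix.cons_val_one]
  ring

end LineRestriction

theorem cubic_support_3I2_in_degenerate_line_ideal_general
    {k : Type*} [Field k] (l : k) (hl0 : l ≠ 0)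
    (I : Ideal (MvPolynomial (Fin 4) k))
    (hI : I = Ideal.span {X 0 + C l * X 1 - X 3, X 0 - X 1 - X 2})
    (α β γ δ : k)
    (h : C α * X 0 ^ 3 + C β * X 0 ^ 2 * X 3 + C γ * X 1 ^ 2 * X 2
        + C δ * X 1 * X 2 * X 3 ∈ I) :
    α = 0 ∧ β = 0 ∧ γ = 0 ∧ δ = 0 := by
  subst hI
  have hzero := span_le_ker_lineRestriction l h
  rw [RingHom.mem_ker, lineRestriction_cubic, Cubic.toPoly_eq_zero_iff] at hzero
  obtain ⟨h3, h2, h1, h0⟩ := Cubic.mk.inj hzero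
  have hδ : δ = 0 := by linear_combination -h1 - h0
  have hγ : γ = 0 := by linear_combination -h0 - l * hδ
  have hβ : β = 0 :=
    (mul_eq_zero.mp (show β * l = 0 by linear_combination h2 - hδ)).resolve_right hl0
  exact ⟨by linear_combination h3 - hβ, hβ, hγ, hδ⟩

/-- Over any field `k`, for `l ≠ 0, -1`, if `α·x0³ + β·x0²x3 + γ·x1²x2 + δ·x1x2x3` lies in
the ideal `⟨x0 + l·x1 - x3, x0 - x1 - x2⟩ ⊆ k[x0,x1,x2,x3]`, then `α = β = γ = δ = 0`. -/
theorem cubic_support_3I2_in_degenerate_line_ideal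
    {k : Type*} [Field k] (l : k) (hl0 : l ≠ 0) (hl1 : l ≠ -1)
    (I : Ideal (MvPolynomial (Fin 4) k))
    (hI : I = Ideal.span {X 0 + C l * X 1 - X 3, X 0 - X 1 - X 2})
    (α β γ δ : k)
    (h : C α * X 0 ^ 3 + C β * X 0 ^ 2 * X 3 + C γ * X 1 ^ 2 * X 2
        + C δ * X 1 * X 2 * X 3 ∈ I) :
    α = 0 ∧ β = 0 ∧ γ = 0 ∧ δ = 0 :=
  cubic_support_3I2_in_degenerate_line_ideal_general l hl0 I hI α β γ δ h
end

section
/- Let k be a field of characteristic 2 and I = ⟨x0 - x1 + x3, x1 + x2⟩ ⊆ k[x0,x1,x2,x3]. Then the polynomial x0³ + x0²·x3 + x1·x3² + x1²·x2 lies in I. -/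
open MvPolynomial

/-! Modulo `⟨a - b + d, b + c⟩` one has `a ≡ b - d` and `c ≡ -b`, and the cubic
`a³ + a²d + bd² + b²c` reduces to `2bd(d - b)`, which vanishes in characteristic 2. -/

theorem cubic_mem_span_pair_of_charTwo {R : Type*} [CommRing R] [CharP R 2] (a b c d : R) :
    a ^ 3 + a ^ 2 * d + b * d ^ 2 + b ^ 2 * c ∈ Ideal.span {a - b + d, b + c} := by
  rw [Ideal.mem_span_pair]
  exact ⟨a ^ 2 + a * b + b ^ 2 + b * d, b ^ 2, by
    linear_combination a * b * d * CharTwo.two_eq_zero (R := R)⟩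

/-- If `char k = 2`, then `x0³ + x0²x3 + x1x3² + x1²x2` lies in the ideal
`⟨x0 - x1 + x3, x1 + x2⟩ ⊆ k[x0,x1,x2,x3]`. -/
theorem cubic_3I1_mem_line_ideal_char_two
    {k : Type*} [Field k] [CharP k 2]
    (I : Ideal (MvPolynomial (Fin 4) k))
    (hI : I = Ideal.span {X 0 - X 1 + X 3, X 1 + X 2}) :
    (X 0 ^ 3 + X 0 ^ 2 * X 3 + X 1 * X 3 ^ 2 + X 1 ^ 2 * X 2 : MvPolynomial (Fin 4) k) ∈ I := by
  subst hI
  exact cubic_mem_span_pair_of_charTwo _ _ _ _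
end

section
/- Over any field k, the vector space of homogeneous cubics in the ideal I = ⟨x0 - x1 + x3, x1 + x2⟩ ⊆ k[x0,x1,x2,x3] whose support is contained in {x0³, x0²x3, x1x3², x1²x2} is: zero-dimensional if char(k) ≠ 2, and one-dimensional (spanned by x0³ + x0²x3 + x1x3² + x1²x2) if char(k) = 2. -/
/-!
The zero set of `I` is the line `[s - t : s : -s : t]`. Restricting
`α x0³ + β x0²x3 + γ x1x3² + δ x1²x2` to it (in the chart `t = 1`) gives
`(α - δ) s³ + (β - 3α) s² + (3α - 2β + γ) s + (β - α)`, whose vanishing forces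
`β = γ = δ = α` and `2α = 0`. Conversely, when `2α = 0` the cubic
`α (x0³ + x0²x3 + x1x3² + x1²x2)` is an explicit combination of the two generators.
-/

open MvPolynomial

namespace LineIdeal

variable {k : Type*} [CommRing k]

noncomputable def restrictToLine : MvPolynomial (Fin 4) k →ₐ[k] Polynomial k :=
  aeval ![Polynomial.X - 1, Polynomial.X, -Polynomial.X, 1]

lemma span_le_ker_restrictToLine :
    Ideal.span {(X 0 - X 1 + X 3 : MvPolynomial (Fin 4) k), X 1 + X 2} ≤
      RingHom.ker (restrictToLine (k := k)) := by
  rw [Ideal.span_le, Set.pair_subset_iff]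
  constructor <;> simp [restrictToLine]

lemma restrictToLine_cubic (α β γ δ : k) :
    restrictToLine (C α * X 0 ^ 3 + C β * X 0 ^ 2 * X 3 + C γ * X 1 * X 3 ^ 2 +
      C δ * X 1 ^ 2 * X 2) =
      (⟨α - δ, β - 3 * α, 3 * α - 2 * β + γ, β - α⟩ : Cubic k).toPoly := by
  simp only [restrictToLine, Cubic.toPoly, map_add, map_mul, map_pow, aeval_C, aeval_X,
    Polynomial.algebraMap_eq, Matrix.cons_val, map_sub, Polynomial.C_ofNat]
  ring

theorem cubic_mem_span_iff (α β γ δ : k) :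
    C α * X 0 ^ 3 + C β * X 0 ^ 2 * X 3 + C γ * X 1 * X 3 ^ 2 + C δ * X 1 ^ 2 * X 2 ∈
        Ideal.span {(X 0 - X 1 + X 3 : MvPolynomial (Fin 4) k), X 1 + X 2} ↔
      α = β ∧ α = γ ∧ α = δ ∧ 2 * α = 0 := by
  constructor
  · intro hmem
    have hzero := span_le_ker_restrictToLine hmem
    rw [RingHom.mem_ker, restrictToLine_cubic,
      ← Cubic.of_d_eq_zero', Cubic.toPoly_injective, Cubic.mk.injEq] at hzero
    obtain ⟨h3, h2, h1, h0⟩ := hzero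
    exact ⟨by linear_combination -h0, by linear_combination -h1 - h2 - h0,
      by linear_combination h3, by linear_combination h0 - h2⟩
  · rintro ⟨rfl, rfl, rfl, h2α⟩
    have h2C : (2 : MvPolynomial (Fin 4) k) * C α = 0 := by
      rw [← map_ofNat C 2, ← map_mul, h2α, map_zero]
    refine Ideal.mem_span_pair.mpr
      ⟨C α * (X 0 ^ 2 + X 0 * (X 1 - X 3) + (X 1 - X 3) ^ 2 + (X 0 + X 1 - X 3) * X 3),
        C α * X 1 ^ 2, ?_⟩
    linear_combination (X 1 ^ 2 * X 3 - X 1 * X 3 ^ 2) * h2C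

end LineIdeal

open LineIdeal in
/-- Over a field `k`, the space of cubics in the ideal `I = ⟨x0 - x1 + x3, x1 + x2⟩`
with support contained in `{x0³, x0²x3, x1x3², x1²x2}` (i.e. of the form
`α·x0³ + β·x0²x3 + γ·x1x3² + δ·x1²x2`) is zero if `char k ≠ 2`, and is the line
spanned by `x0³ + x0²x3 + x1x3² + x1²x2` (i.e. `α = β = γ = δ`) if `char k = 2`. -/
theorem cubics_supported_on_3I1_in_line_ideal
    {k : Type*} [Field k]
    (I : Ideal (MvPolynomial (Fin 4) k))
    (hI : I = Ideal.span {X 0 - X 1 + X 3, X 1 + X 2}) :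
    (ringChar k ≠ 2 → ∀ α β γ δ : k,
      C α * X 0 ^ 3 + C β * X 0 ^ 2 * X 3 + C γ * X 1 * X 3 ^ 2 + C δ * X 1 ^ 2 * X 2 ∈ I →
        α = 0 ∧ β = 0 ∧ γ = 0 ∧ δ = 0) ∧
    (ringChar k = 2 → ∀ α β γ δ : k,
      (C α * X 0 ^ 3 + C β * X 0 ^ 2 * X 3 + C γ * X 1 * X 3 ^ 2 + C δ * X 1 ^ 2 * X 2 ∈ I ↔
        ∃ c : k, α = c ∧ β = c ∧ γ = c ∧ δ = c)) := by
  subst hI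
  refine ⟨fun hchar α β γ δ hmem => ?_, fun hchar α β γ δ => ?_⟩
  · obtain ⟨rfl, rfl, rfl, h2α⟩ := (cubic_mem_span_iff α β γ δ).mp hmem
    have hα : α = 0 := (mul_eq_zero.mp h2α).resolve_left (Ring.two_ne_zero hchar)
    exact ⟨hα, hα, hα, hα⟩
  · have : CharP k 2 := ringChar.of_eq hchar
    rw [cubic_mem_span_iff, CharTwo.two_eq_zero, zero_mul]
    constructor
    · rintro ⟨rfl, rfl, rfl, -⟩
      exact ⟨α, rfl, rfl, rfl, rfl⟩
    · rintro ⟨c, rfl, rfl, rfl, rfl⟩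
      exact ⟨rfl, rfl, rfl, rfl⟩
end
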